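/- Fix main-effect coefficients β_{dl} (for d = 1,…,D and l = 1,…,L_d − 1), two-way interaction coefficients γ_{dl,d'l'} (for d < d', 1 ≤ l ≤ L_d − 1, 1 ≤ l' ≤ L_{d'} − 1), and a design probability vector p with entries p_{dl} ≥ 0 satisfying Σ_{l=1}^{L_d} p_{dl} = 1 for each factor d. Parameterize a stochastic intervention by its free coordinates π_{dl} for 1 ≤ l ≤ L_d − 1, with the last level determined as π_{dL_d} = 1 − Σ_{l<L_d} π_{dl}, and for λ > 0 consider the penalized average-case objective F(π) = Σ_{d=1}^D Σ_{l<L_d} β_{dl} π_{dl} + Σ_{d<d'} Σ_{l<L_d} Σ_{l'<L_{d'}} γ_{dl,d'l'} π_{dl} π_{d'l'} − λ Σ_{d=1}^D Σ_{l=1}^{L_d} (π_{dl} − p_{dl})² on ℝ^k with k = Σ_d (L_d − 1). Let r(dl) index the free coordinates, and define the vector B ∈ ℝ^k and the symmetric k×k matrix C by: B_{r(dl)} = −β_{dl} − 4λ p_{dl} − 2λ Σ_{l'≠l, l'<L_d} p_{dl'}; C_{r(dl),r(dl)} = −4λ; C_{r(dl),r(dl')} = −2λ for l' ≠ l within the same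 factor d; and C_{r(dl),r(d'l'')} = γ_{dl,d'l''} for d ≠ d'. Then there exists λ₀ ≥ 0 such that for every λ > λ₀: the matrix C is negative definite (hence invertible), F is strictly concave on ℝ^k, and the unique global maximizer of F (the average-case optimal L2-regularized stochastic intervention) is π* = C⁻¹ B. -/

import Mathlib

open Finset Matrix

namespace Stmt0

variable {D : ℕ} {L : Fin D → ℕ}

/-- Index type of the free coordinates: one coordinate for each factor `d` and each
non-final level `l ∈ {1, …, L_d - 1}`. -/
abbrev FreeIdx (D : ℕ) (L : Fin D → ℕ) : Type := Σ d : Fin D, Fin (L d - 1)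

/-- Embed a free level index `l ∈ {1, …, L_d - 1}` into the full level set `{1, …, L_d}`. -/
def castLvl (d : Fin D) (l : Fin (L d - 1)) : Fin (L d) :=
  ⟨(l : ℕ), by omega⟩

/-- The full probability vector of factor `d` determined by the free coordinates:
`π_{dl}` for `l < L_d - 1` and `π_{d L_d} = 1 - ∑_{l < L_d - 1} π_{dl}` for the last level. -/
noncomputable def fullProb (π : FreeIdx D L → ℝ) (d : Fin D) (l : Fin (L d)) : ℝ :=
  if h : (l : ℕ) < L d - 1 then π ⟨d, ⟨(l : ℕ), h⟩⟩
  else 1 - ∑ l' : Fin (L d - 1), π ⟨d, l'⟩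

/-- The penalized average-case objective
`F(π) = ∑_{d} ∑_{l<L_d} β_{dl} π_{dl} + ∑_{d<d'} ∑_{l<L_d} ∑_{l'<L_{d'}} γ_{dl,d'l'} π_{dl} π_{d'l'}
        - λ ∑_{d} ∑_{l=1}^{L_d} (π_{dl} - p_{dl})²`,
where the last level of each factor is determined by the sum-to-one constraint. -/
noncomputable def objF (β : (d : Fin D) → Fin (L d - 1) → ℝ)
    (γ : (d : Fin D) → (d' : Fin D) → Fin (L d - 1) → Fin (L d' - 1) → ℝ)
    (p : (d : Fin D) → Fin (L d) → ℝ) (lam : ℝ) (π : FreeIdx D L → ℝ) : ℝ :=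
  (∑ d, ∑ l, β d l * π ⟨d, l⟩)
    + (∑ d, ∑ d' ∈ univ.filter (fun d' => d < d'), ∑ l, ∑ l',
        γ d d' l l' * π ⟨d, l⟩ * π ⟨d', l'⟩)
    - lam * ∑ d, ∑ l : Fin (L d), (fullProb π d l - p d l) ^ 2

/-- The vector `B` with entries `B_{r(dl)} = -β_{dl} - 4λ p_{dl} - 2λ ∑_{l'≠l, l'<L_d} p_{dl'}`. -/
def vecB (β : (d : Fin D) → Fin (L d - 1) → ℝ)
    (p : (d : Fin D) → Fin (L d) → ℝ) (lam : ℝ) : FreeIdx D L → ℝ :=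
  fun i =>
    -β i.1 i.2 - 4 * lam * p i.1 (castLvl i.1 i.2)
      - 2 * lam * ∑ l' ∈ univ.filter (fun l' => l' ≠ i.2), p i.1 (castLvl i.1 l')

/-- The symmetric matrix `C` with `C_{r(dl),r(dl)} = -4λ`, `C_{r(dl),r(dl')} = -2λ` for
`l' ≠ l` within the same factor, and `C_{r(dl),r(d'l'')} = γ_{dl,d'l''}` across distinct
factors (where `γ` is given for `d < d'` and used symmetrically). -/
def matC (γ : (d : Fin D) → (d' : Fin D) → Fin (L d - 1) → Fin (L d' - 1) → ℝ)
    (lam : ℝ) : Matrix (FreeIdx D L) (FreeIdx D L) ℝ :=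
  fun i j =>
    if i.1 = j.1 then (if i = j then -(4 * lam) else -(2 * lam))
    else if i.1 < j.1 then γ i.1 j.1 i.2 j.2 else γ j.1 i.1 j.2 i.2

/-! ### auxiliary defs -/

noncomputable def Sf (π : FreeIdx D L → ℝ) (d : Fin D) : ℝ := ∑ l, π ⟨d, l⟩
noncomputable def Qf (π : FreeIdx D L → ℝ) (d : Fin D) : ℝ := ∑ l, (π ⟨d, l⟩) ^ 2
noncomputable def Inter (γ : (d : Fin D) → (d' : Fin D) → Fin (L d - 1) → Fin (L d' - 1) → ℝ)
    (π : FreeIdx D L → ℝ) : ℝ :=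
  ∑ d, ∑ d' ∈ univ.filter (fun d' => d < d'), ∑ l, ∑ l',
    γ d d' l l' * π ⟨d, l⟩ * π ⟨d', l'⟩

def lastLvl (hL : ∀ d, 2 ≤ L d) (d : Fin D) : Fin (L d) := ⟨L d - 1, by have := hL d; omega⟩

/-! ### sum lemmas -/

lemma sum_freeIdx (f : FreeIdx D L → ℝ) :
    ∑ i : FreeIdx D L, f i = ∑ d, ∑ l, f ⟨d, l⟩ := by
  rw [← Finset.univ_sigma_univ, Finset.sum_sigma]

lemma sum_split (hL : ∀ d, 2 ≤ L d) (d : Fin D) (f : Fin (L d) → ℝ) :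
    ∑ l, f l = (∑ l : Fin (L d - 1), f (castLvl d l)) + f (lastLvl hL d) := by
  have h : L d - 1 + 1 = L d := by have := hL d; omega
  calc ∑ l, f l = ∑ l : Fin (L d - 1 + 1), f (Fin.cast h l) :=
        (Fintype.sum_equiv (finCongr h) _ _ (fun i => rfl)).symm
    _ = _ := by
        rw [Fin.sum_univ_castSucc]
        rfl

lemma sum_lt_swap (g : Fin D → Fin D → ℝ) :
    ∑ d, ∑ d' ∈ univ.filter (fun d' => d' < d), g d d'
      = ∑ d, ∑ d' ∈ univ.filter (fun d' => d < d'), g d' d := by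
  simp only [Finset.sum_filter]
  exact Finset.sum_comm

lemma sum_tri' (d : Fin D) (h : Fin D → ℝ) :
    ∑ d', h d' = h d + (∑ d' ∈ univ.filter (fun d' => d < d'), h d')
      + ∑ d' ∈ univ.filter (fun d' => d' < d), h d' := by
  have key : ∀ d', h d' = (if d' = d then h d' else 0) + (if d < d' then h d' else 0)
      + (if d' < d then h d' else 0) := by
    intro d'
    rcases lt_trichotomy d d' with hlt | heq | hgt
    · simp [hlt, ne_of_gt hlt, not_lt_of_gt hlt]
    · subst heq; simp
    · simp [hgt, ne_of_lt hgt, not_lt_of_gt hgt]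
  rw [Finset.sum_congr rfl (fun d' _ => key d'), Finset.sum_add_distrib,
    Finset.sum_add_distrib, Finset.sum_ite_eq' univ d h, Finset.sum_filter, Finset.sum_filter]
  simp

/-! ### fullProb evaluations -/

lemma fullProb_cast (π : FreeIdx D L → ℝ) (d : Fin D) (l : Fin (L d - 1)) :
    fullProb π d (castLvl d l) = π ⟨d, l⟩ := by
  have h : ((castLvl d l : Fin (L d)) : ℕ) < L d - 1 := l.2
  rw [fullProb, dif_pos h]
  rfl

lemma fullProb_last (hL : ∀ d, 2 ≤ L d) (π : FreeIdx D L → ℝ) (d : Fin D) :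
    fullProb π d (lastLvl hL d) = 1 - Sf π d := by
  rw [fullProb, dif_neg (by simp [lastLvl])]
  rfl

/-! ### quadratic form -/

lemma quad_eq (γ : (d : Fin D) → (d' : Fin D) → Fin (L d - 1) → Fin (L d' - 1) → ℝ)
    (lam : ℝ) (π : FreeIdx D L → ℝ) :
    π ⬝ᵥ matC γ lam *ᵥ π
      = (∑ d, -(2*lam) * ((Sf π d)^2 + Qf π d)) + 2 * Inter γ π := by
  have hdot : π ⬝ᵥ matC γ lam *ᵥ π
      = ∑ d, ∑ l, π ⟨d, l⟩ * ∑ d', ∑ l', matC γ lam ⟨d, l⟩ ⟨d', l'⟩ * π ⟨d', l'⟩ := by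
    simp only [dotProduct, Matrix.mulVec, sum_freeIdx]
  rw [hdot]
  have step1 : ∀ (d : Fin D) (l : Fin (L d - 1)),
      (∑ d', ∑ l', matC γ lam ⟨d, l⟩ ⟨d', l'⟩ * π ⟨d', l'⟩)
        = (∑ l', (if l = l' then -(4*lam) else -(2*lam)) * π ⟨d, l'⟩)
          + (∑ d' ∈ univ.filter (fun d' => d < d'), ∑ l', γ d d' l l' * π ⟨d', l'⟩)
          + (∑ d' ∈ univ.filter (fun d' => d' < d), ∑ l', γ d' d l' l * π ⟨d', l'⟩) := by
    intro d l
    rw [sum_tri' d (fun d' => ∑ l', matC γ lam ⟨d, l⟩ ⟨d', l'⟩ * π ⟨d', l'⟩)]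
    congr 1
    congr 1
    · refine Finset.sum_congr rfl fun l' _ => ?_
      simp [matC]
    · refine Finset.sum_congr rfl fun d' hd' => Finset.sum_congr rfl fun l' _ => ?_
      simp only [mem_filter] at hd'
      simp [matC, ne_of_lt hd'.2, hd'.2]
    · refine Finset.sum_congr rfl fun d' hd' => Finset.sum_congr rfl fun l' _ => ?_
      simp only [mem_filter] at hd'
      simp [matC, ne_of_gt hd'.2, not_lt_of_gt hd'.2]
  calc ∑ d, ∑ l, π ⟨d, l⟩ * ∑ d', ∑ l', matC γ lam ⟨d, l⟩ ⟨d', l'⟩ * π ⟨d', l'⟩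
      = ∑ d, ((∑ l, π ⟨d, l⟩ * ∑ l', (if l = l' then -(4*lam) else -(2*lam)) * π ⟨d, l'⟩)
          + (∑ l, π ⟨d, l⟩ * ∑ d' ∈ univ.filter (fun d' => d < d'), ∑ l', γ d d' l l' * π ⟨d', l'⟩)
          + (∑ l, π ⟨d, l⟩ * ∑ d' ∈ univ.filter (fun d' => d' < d), ∑ l', γ d' d l' l * π ⟨d', l'⟩)) := by
        refine Finset.sum_congr rfl fun d _ => ?_
        rw [← Finset.sum_add_distrib, ← Finset.sum_add_distrib]
        refine Finset.sum_congr rfl fun l _ => ?_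
        rw [step1 d l]; ring
    _ = ∑ d, (-(2*lam) * ((Sf π d)^2 + Qf π d)
          + (∑ d' ∈ univ.filter (fun d' => d < d'), ∑ l, ∑ l', γ d d' l l' * π ⟨d, l⟩ * π ⟨d', l'⟩)
          + (∑ d' ∈ univ.filter (fun d' => d' < d), ∑ l', ∑ l, γ d' d l' l * π ⟨d', l'⟩ * π ⟨d, l⟩)) := by
        refine Finset.sum_congr rfl fun d _ => ?_
        congr 1
        congr 1
        · -- diagonal block
          have h1 : ∀ l : Fin (L d - 1),
              (∑ l', (if l = l' then -(4*lam) else -(2*lam)) * π ⟨d, l'⟩)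
                = -(2*lam) * Sf π d + -(2*lam) * π ⟨d, l⟩ := by
            intro l
            have : ∀ l' : Fin (L d - 1),
                (if l = l' then -(4*lam) else -(2*lam)) * π ⟨d, l'⟩
                  = -(2*lam) * π ⟨d, l'⟩ + (if l = l' then -(2*lam) * π ⟨d, l'⟩ else 0) := by
              intro l'; split <;> ring
            rw [Finset.sum_congr rfl (fun l' _ => this l'), Finset.sum_add_distrib,
              ← Finset.mul_sum, Finset.sum_ite_eq univ l (fun l' => -(2*lam) * π ⟨d, l'⟩)]
            simp [Sf]
          rw [Finset.sum_congr rfl (fun l _ => by rw [h1 l])]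
          have : ∑ l, π ⟨d, l⟩ * (-(2*lam) * Sf π d + -(2*lam) * π ⟨d, l⟩)
              = -(2*lam) * Sf π d * (∑ l, π ⟨d, l⟩) + -(2*lam) * ∑ l, (π ⟨d, l⟩)^2 := by
            rw [Finset.mul_sum, Finset.mul_sum, ← Finset.sum_add_distrib]
            refine Finset.sum_congr rfl fun l _ => by ring
          rw [this]
          simp only [Sf, Qf]
          ring
        · -- d < d' block
          calc ∑ l, π ⟨d, l⟩ * ∑ d' ∈ univ.filter (fun d' => d < d'), ∑ l', γ d d' l l' * π ⟨d', l'⟩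
              = ∑ l, ∑ d' ∈ univ.filter (fun d' => d < d'), π ⟨d, l⟩ * ∑ l', γ d d' l l' * π ⟨d', l'⟩ :=
                Finset.sum_congr rfl fun l _ => Finset.mul_sum _ _ _
            _ = ∑ d' ∈ univ.filter (fun d' => d < d'), ∑ l, π ⟨d, l⟩ * ∑ l', γ d d' l l' * π ⟨d', l'⟩ :=
                Finset.sum_comm
            _ = _ := by
                refine Finset.sum_congr rfl fun d' _ => Finset.sum_congr rfl fun l _ => ?_
                rw [Finset.mul_sum]
                exact Finset.sum_congr rfl fun l' _ => by ring
        · -- d' < d block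
          calc ∑ l, π ⟨d, l⟩ * ∑ d' ∈ univ.filter (fun d' => d' < d), ∑ l', γ d' d l' l * π ⟨d', l'⟩
              = ∑ l, ∑ d' ∈ univ.filter (fun d' => d' < d), π ⟨d, l⟩ * ∑ l', γ d' d l' l * π ⟨d', l'⟩ :=
                Finset.sum_congr rfl fun l _ => Finset.mul_sum _ _ _
            _ = ∑ d' ∈ univ.filter (fun d' => d' < d), ∑ l, π ⟨d, l⟩ * ∑ l', γ d' d l' l * π ⟨d', l'⟩ :=
                Finset.sum_comm
            _ = ∑ d' ∈ univ.filter (fun d' => d' < d), ∑ l, ∑ l',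
                  π ⟨d, l⟩ * (γ d' d l' l * π ⟨d', l'⟩) :=
                Finset.sum_congr rfl fun d' _ => Finset.sum_congr rfl fun l _ => Finset.mul_sum _ _ _
            _ = _ := by
                refine Finset.sum_congr rfl fun d' _ => ?_
                rw [Finset.sum_comm]
                exact Finset.sum_congr rfl fun l' _ => Finset.sum_congr rfl fun l _ => by ring
    _ = _ := by
        rw [Finset.sum_add_distrib, Finset.sum_add_distrib,
          sum_lt_swap (fun d d' => ∑ l', ∑ l, γ d' d l' l * π ⟨d', l'⟩ * π ⟨d, l⟩)]
        simp only [Inter]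
        ring


lemma dotB_eq (hL : ∀ d, 2 ≤ L d) (β : (d : Fin D) → Fin (L d - 1) → ℝ)
    (p : (d : Fin D) → Fin (L d) → ℝ) (lam : ℝ) (hp1 : ∀ d, ∑ l, p d l = 1)
    (π : FreeIdx D L → ℝ) :
    vecB β p lam ⬝ᵥ π
      = ∑ d, ∑ l, (-β d l - 2*lam * p d (castLvl d l)
          - 2*lam * (1 - p d (lastLvl hL d))) * π ⟨d, l⟩ := by
  have hps : ∀ d, ∑ l : Fin (L d - 1), p d (castLvl d l) = 1 - p d (lastLvl hL d) := by
    intro d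
    have h := sum_split hL d (p d)
    rw [hp1 d] at h
    linarith
  simp only [dotProduct, sum_freeIdx]
  refine Finset.sum_congr rfl fun d _ => Finset.sum_congr rfl fun l _ => ?_
  have herase : ∑ l' ∈ univ.filter (fun l' => l' ≠ l), p d (castLvl d l')
      = (1 - p d (lastLvl hL d)) - p d (castLvl d l) := by
    rw [Finset.filter_ne', Finset.sum_erase_eq_sub (Finset.mem_univ l), hps d]
  simp only [vecB]
  rw [herase]
  ring

lemma objF_zero (hL : ∀ d, 2 ≤ L d) (β : (d : Fin D) → Fin (L d - 1) → ℝ)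
    (γ : (d : Fin D) → (d' : Fin D) → Fin (L d - 1) → Fin (L d' - 1) → ℝ)
    (p : (d : Fin D) → Fin (L d) → ℝ) (lam : ℝ) :
    objF β γ p lam 0
      = -(lam * ∑ d, ((∑ l, (p d (castLvl d l))^2) + (1 - p d (lastLvl hL d))^2)) := by
  have pen0 : ∀ d, ∑ l : Fin (L d), (fullProb (0 : FreeIdx D L → ℝ) d l - p d l)^2
      = (∑ l, (p d (castLvl d l))^2) + (1 - p d (lastLvl hL d))^2 := by
    intro d
    rw [sum_split hL d]
    congr 1
    · refine Finset.sum_congr rfl fun l _ => ?_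
      rw [fullProb_cast, Pi.zero_apply, zero_sub, neg_sq]
    · rw [fullProb_last hL]
      simp [Sf]
  simp only [objF, Pi.zero_apply, mul_zero, zero_mul, Finset.sum_const_zero]
  rw [Finset.sum_congr rfl fun d _ => pen0 d]
  ring

lemma assemble (I : ℝ) (A X W Y Z : Fin D → ℝ) (lam : ℝ)
    (key : ∀ d, A d - lam * X d = (1/2) * W d - Y d - lam * Z d) :
    (∑ d, A d) + I - lam * (∑ d, X d)
      = (1/2) * ((∑ d, W d) + 2 * I) - (∑ d, Y d) + -(lam * (∑ d, Z d)) := by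
  have h1 : ∑ d, (A d - lam * X d) = ∑ d, ((1/2) * W d - Y d - lam * Z d) :=
    Finset.sum_congr rfl fun d _ => key d
  rw [Finset.sum_sub_distrib, Finset.sum_sub_distrib, Finset.sum_sub_distrib,
    ← Finset.mul_sum, ← Finset.mul_sum, ← Finset.mul_sum] at h1
  linarith

lemma objF_eq (hL : ∀ d, 2 ≤ L d) (β : (d : Fin D) → Fin (L d - 1) → ℝ)
    (γ : (d : Fin D) → (d' : Fin D) → Fin (L d - 1) → Fin (L d' - 1) → ℝ)
    (p : (d : Fin D) → Fin (L d) → ℝ) (lam : ℝ) (hp1 : ∀ d, ∑ l, p d l = 1)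
    (π : FreeIdx D L → ℝ) :
    objF β γ p lam π
      = (1/2) * (π ⬝ᵥ matC γ lam *ᵥ π) - vecB β p lam ⬝ᵥ π + objF β γ p lam 0 := by
  rw [quad_eq, dotB_eq hL β p lam hp1, objF_zero hL β γ p lam]
  have pen : ∀ d, ∑ l : Fin (L d), (fullProb π d l - p d l)^2
      = (∑ l, (π ⟨d,l⟩ - p d (castLvl d l))^2) + (1 - Sf π d - p d (lastLvl hL d))^2 := by
    intro d
    rw [sum_split hL d]
    congr 1
    · exact Finset.sum_congr rfl fun l _ => by rw [fullProb_cast]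
    · rw [fullProb_last hL]
  simp only [objF, Inter]
  rw [Finset.sum_congr rfl (fun d _ => pen d)]
  refine assemble _ _ _ _ _ _ lam fun d => ?_
  simp only [Sf, Qf]
  have e1 : ∑ l, (π ⟨d,l⟩ - p d (castLvl d l))^2
      = (∑ l, (π ⟨d,l⟩)^2) - 2*(∑ l, p d (castLvl d l) * π ⟨d,l⟩)
        + ∑ l, (p d (castLvl d l))^2 := by
    calc ∑ l, (π ⟨d,l⟩ - p d (castLvl d l))^2
        = ∑ l, ((π ⟨d,l⟩)^2 - 2*(p d (castLvl d l) * π ⟨d,l⟩) + (p d (castLvl d l))^2) :=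
          Finset.sum_congr rfl fun l _ => by ring
      _ = _ := by
          rw [Finset.sum_add_distrib, Finset.sum_sub_distrib, ← Finset.mul_sum]
  have e2 : ∑ l, (-β d l - 2*lam * p d (castLvl d l)
        - 2*lam * (1 - p d (lastLvl hL d))) * π ⟨d,l⟩
      = -(∑ l, β d l * π ⟨d,l⟩) + (-(2*lam))*(∑ l, p d (castLvl d l) * π ⟨d,l⟩)
        + (-(2*lam * (1 - p d (lastLvl hL d))))*(∑ l, π ⟨d,l⟩) := by
    calc ∑ l, (-β d l - 2*lam * p d (castLvl d l)
          - 2*lam * (1 - p d (lastLvl hL d))) * π ⟨d,l⟩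
        = ∑ l, (-(β d l * π ⟨d,l⟩) + (-(2*lam))*(p d (castLvl d l) * π ⟨d,l⟩)
            + (-(2*lam * (1 - p d (lastLvl hL d))))*(π ⟨d,l⟩)) :=
          Finset.sum_congr rfl fun l _ => by ring
      _ = _ := by
          rw [Finset.sum_add_distrib, Finset.sum_add_distrib, ← Finset.mul_sum,
            ← Finset.mul_sum, Finset.sum_neg_distrib]
  rw [e1, e2]
  ring

lemma matC_symm (γ : (d : Fin D) → (d' : Fin D) → Fin (L d - 1) → Fin (L d' - 1) → ℝ)
    (lam : ℝ) (i j : FreeIdx D L) : matC γ lam j i = matC γ lam i j := by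
  obtain ⟨d, l⟩ := i
  obtain ⟨d', l'⟩ := j
  rcases lt_trichotomy d d' with hlt | heq | hgt
  · simp [matC, ne_of_lt hlt, ne_of_gt hlt, hlt, not_lt_of_gt hlt]
  · subst heq
    by_cases h : l = l'
    · subst h; rfl
    · simp [matC, h, Ne.symm h]
  · simp [matC, ne_of_lt hgt, ne_of_gt hgt, hgt, not_lt_of_gt hgt]

lemma q_symm (γ : (d : Fin D) → (d' : Fin D) → Fin (L d - 1) → Fin (L d' - 1) → ℝ)
    (lam : ℝ) (x y : FreeIdx D L → ℝ) :
    x ⬝ᵥ matC γ lam *ᵥ y = y ⬝ᵥ matC γ lam *ᵥ x := by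
  simp only [dotProduct, Matrix.mulVec]
  calc ∑ i, x i * ∑ j, matC γ lam i j * y j
      = ∑ i, ∑ j, x i * (matC γ lam i j * y j) :=
        Finset.sum_congr rfl fun i _ => Finset.mul_sum _ _ _
    _ = ∑ j, ∑ i, x i * (matC γ lam i j * y j) := Finset.sum_comm
    _ = ∑ j, y j * ∑ i, matC γ lam j i * x i := by
        refine Finset.sum_congr rfl fun j _ => ?_
        rw [Finset.mul_sum]
        refine Finset.sum_congr rfl fun i _ => ?_
        rw [matC_symm γ lam j i]
        ring

lemma q_combo (γ : (d : Fin D) → (d' : Fin D) → Fin (L d - 1) → Fin (L d' - 1) → ℝ)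
    (lam : ℝ) (x y : FreeIdx D L → ℝ) (a b : ℝ) :
    (a • x + b • y) ⬝ᵥ matC γ lam *ᵥ (a • x + b • y)
      = a^2 * (x ⬝ᵥ matC γ lam *ᵥ x) + 2*a*b * (x ⬝ᵥ matC γ lam *ᵥ y)
        + b^2 * (y ⬝ᵥ matC γ lam *ᵥ y) := by
  simp only [Matrix.mulVec_add, Matrix.mulVec_smul, dotProduct_add,
    add_dotProduct, smul_dotProduct, dotProduct_smul, smul_eq_mul]
  rw [q_symm γ lam y x]
  ring

lemma q_sub (γ : (d : Fin D) → (d' : Fin D) → Fin (L d - 1) → Fin (L d' - 1) → ℝ)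
    (lam : ℝ) (x y : FreeIdx D L → ℝ) :
    (x - y) ⬝ᵥ matC γ lam *ᵥ (x - y)
      = (x ⬝ᵥ matC γ lam *ᵥ x) - 2 * (x ⬝ᵥ matC γ lam *ᵥ y)
        + (y ⬝ᵥ matC γ lam *ᵥ y) := by
  simp only [Matrix.mulVec_sub, dotProduct_sub, sub_dotProduct]
  rw [q_symm γ lam y x]
  ring

lemma negC_posdef (γ : (d : Fin D) → (d' : Fin D) → Fin (L d - 1) → Fin (L d' - 1) → ℝ)
    (lam : ℝ)
    (hlam : (∑ d, ∑ d', ∑ l, ∑ l', |γ d d' l l'|) < lam) :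
    (-(matC γ lam)).PosDef := by
  set M := ∑ d, ∑ d', ∑ l, ∑ l', |γ d d' l l'| with hM
  have hM0 : 0 ≤ M := by positivity
  have hlam0 : 0 < lam := lt_of_le_of_lt hM0 hlam
  refine Matrix.posDef_iff_dotProduct_mulVec.mpr ⟨?_, ?_⟩
  · unfold Matrix.IsHermitian
    ext i j
    simp only [Matrix.conjTranspose_apply, Matrix.neg_apply, star_neg, star_trivial]
    rw [matC_symm]
  · intro x hx
    have hstar : star x = x := rfl
    rw [hstar, Matrix.neg_mulVec, dotProduct_neg, quad_eq]
    set Qt := ∑ i : FreeIdx D L, (x i)^2 with hQt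
    have hQt_pos : 0 < Qt := by
      have hex : ∃ i, x i ≠ 0 := by
        by_contra h
        push_neg at h
        exact hx (funext h)
      obtain ⟨i, hi⟩ := hex
      exact Finset.sum_pos' (fun k _ => sq_nonneg _)
        ⟨i, Finset.mem_univ i, (sq_nonneg _).lt_of_ne (Ne.symm (pow_ne_zero 2 hi))⟩
    have hsumQ : ∑ d, Qf x d = Qt := (sum_freeIdx fun i => (x i)^2).symm
    have hsum_ge : Qt ≤ ∑ d, ((Sf x d)^2 + Qf x d) := by
      rw [Finset.sum_add_distrib, ← hsumQ]
      have : (0:ℝ) ≤ ∑ d, (Sf x d)^2 := Finset.sum_nonneg fun d _ => sq_nonneg _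
      linarith
    have hxx : ∀ i j : FreeIdx D L, |x i * x j| ≤ Qt := by
      intro i j
      have h1 : (x i)^2 ≤ Qt :=
        Finset.single_le_sum (f := fun k => (x k)^2) (fun k _ => sq_nonneg _) (Finset.mem_univ i)
      have h2 : (x j)^2 ≤ Qt :=
        Finset.single_le_sum (f := fun k => (x k)^2) (fun k _ => sq_nonneg _) (Finset.mem_univ j)
      rw [abs_mul]
      nlinarith [abs_nonneg (x i), abs_nonneg (x j), sq_abs (x i), sq_abs (x j)]
    have inner_bd : ∀ (d d' : Fin D), |∑ l, ∑ l', γ d d' l l' * x ⟨d,l⟩ * x ⟨d',l'⟩|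
        ≤ ∑ l, ∑ l', |γ d d' l l'| * Qt := by
      intro d d'
      calc |∑ l, ∑ l', γ d d' l l' * x ⟨d,l⟩ * x ⟨d',l'⟩|
          ≤ ∑ l, |∑ l', γ d d' l l' * x ⟨d,l⟩ * x ⟨d',l'⟩| := Finset.abs_sum_le_sum_abs _ _
        _ ≤ ∑ l, ∑ l', |γ d d' l l' * x ⟨d,l⟩ * x ⟨d',l'⟩| :=
            Finset.sum_le_sum fun l _ => Finset.abs_sum_le_sum_abs _ _
        _ ≤ ∑ l, ∑ l', |γ d d' l l'| * Qt := by
            refine Finset.sum_le_sum fun l _ => Finset.sum_le_sum fun l' _ => ?_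
            rw [mul_assoc, abs_mul]
            exact mul_le_mul_of_nonneg_left (hxx _ _) (abs_nonneg _)
    have filt_bd : ∀ d, |∑ d' ∈ univ.filter (fun d' => d < d'), ∑ l, ∑ l',
          γ d d' l l' * x ⟨d,l⟩ * x ⟨d',l'⟩|
        ≤ ∑ d', ∑ l, ∑ l', |γ d d' l l'| * Qt := by
      intro d
      calc |∑ d' ∈ univ.filter (fun d' => d < d'), ∑ l, ∑ l', γ d d' l l' * x ⟨d,l⟩ * x ⟨d',l'⟩|
          ≤ ∑ d' ∈ univ.filter (fun d' => d < d'), |∑ l, ∑ l', γ d d' l l' * x ⟨d,l⟩ * x ⟨d',l'⟩| :=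
            Finset.abs_sum_le_sum_abs _ _
        _ ≤ ∑ d' ∈ univ.filter (fun d' => d < d'), ∑ l, ∑ l', |γ d d' l l'| * Qt :=
            Finset.sum_le_sum fun d' _ => inner_bd d d'
        _ ≤ ∑ d', ∑ l, ∑ l', |γ d d' l l'| * Qt :=
            Finset.sum_le_sum_of_subset_of_nonneg (Finset.filter_subset _ _)
              (fun d' _ _ => by positivity)
    have habs : Inter γ x ≤ M * Qt := by
      have h1 : |Inter γ x| ≤ M * Qt := by
        calc |Inter γ x| ≤ ∑ d, |∑ d' ∈ univ.filter (fun d' => d < d'), ∑ l, ∑ l',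
              γ d d' l l' * x ⟨d,l⟩ * x ⟨d',l'⟩| := Finset.abs_sum_le_sum_abs _ _
          _ ≤ ∑ d, ∑ d', ∑ l, ∑ l', |γ d d' l l'| * Qt :=
              Finset.sum_le_sum fun d _ => filt_bd d
          _ = M * Qt := by
              rw [hM]
              simp only [Finset.sum_mul]
      exact le_trans (le_abs_self _) h1
    have hT : ∑ d, -(2*lam) * ((Sf x d)^2 + Qf x d)
        = -(2*lam) * ∑ d, ((Sf x d)^2 + Qf x d) := (Finset.mul_sum _ _ _).symm
    rw [hT]
    have h1 : lam * Qt ≤ lam * ∑ d, ((Sf x d)^2 + Qf x d) :=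
      mul_le_mul_of_nonneg_left hsum_ge hlam0.le
    have h2 : M * Qt < lam * Qt := mul_lt_mul_of_pos_right hlam hQt_pos
    nlinarith [h1, h2, habs]


/-- Proposition 1: for all sufficiently large penalty `λ`, the matrix `C` is negative
definite (hence invertible), the penalized objective `F` is strictly concave on `ℝ^k`, and
its unique global maximizer (the average-case optimal `L₂`-regularized stochastic
intervention) is `π* = C⁻¹ B`. -/
theorem stmt0 (D : ℕ) (L : Fin D → ℕ) (hL : ∀ d, 2 ≤ L d)
    (β : (d : Fin D) → Fin (L d - 1) → ℝ)
    (γ : (d : Fin D) → (d' : Fin D) → Fin (L d - 1) → Fin (L d' - 1) → ℝ)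
    (p : (d : Fin D) → Fin (L d) → ℝ)
    (hp0 : ∀ d l, 0 ≤ p d l) (hp1 : ∀ d, ∑ l, p d l = 1) :
    ∃ lam₀ : ℝ, 0 ≤ lam₀ ∧ ∀ lam : ℝ, lam₀ < lam →
      (-(matC γ lam)).PosDef ∧ IsUnit (matC γ lam).det ∧
      StrictConcaveOn ℝ Set.univ (objF β γ p lam) ∧
      ∀ π : FreeIdx D L → ℝ, π ≠ (matC γ lam)⁻¹ *ᵥ vecB β p lam →
        objF β γ p lam π < objF β γ p lam ((matC γ lam)⁻¹ *ᵥ vecB β p lam) := by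
  refine ⟨∑ d, ∑ d', ∑ l, ∑ l', |γ d d' l l'|, by positivity, fun lam hlam => ?_⟩
  have hpd := negC_posdef γ lam hlam
  have hdet : IsUnit (matC γ lam).det := by
    have h1 : (0:ℝ) < (-(matC γ lam)).det := hpd.det_pos
    rw [Matrix.det_neg] at h1
    rw [isUnit_iff_ne_zero]
    intro h
    rw [h, mul_zero] at h1
    exact lt_irrefl _ h1
  set piS := (matC γ lam)⁻¹ *ᵥ vecB β p lam with hpiS
  have hCpi : matC γ lam *ᵥ piS = vecB β p lam := by
    rw [hpiS, Matrix.mulVec_mulVec, Matrix.mul_nonsing_inv _ hdet, Matrix.one_mulVec]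
  refine ⟨hpd, hdet, ?_, ?_⟩
  · -- strict concavity
    refine ⟨convex_univ, fun x _ y _ hxy a b ha hb hab => ?_⟩
    have hb' : b = 1 - a := by linarith
    subst hb'
    have hxy0 : x - y ≠ 0 := sub_ne_zero.mpr hxy
    have hneg : 0 < (x - y) ⬝ᵥ (-(matC γ lam)) *ᵥ (x - y) := by
      have h := hpd.dotProduct_mulVec_pos hxy0
      rwa [show star (x - y) = x - y from rfl] at h
    rw [Matrix.neg_mulVec, dotProduct_neg, q_sub] at hneg
    simp only [smul_eq_mul]
    rw [objF_eq hL β γ p lam hp1 x, objF_eq hL β γ p lam hp1 y,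
      objF_eq hL β γ p lam hp1 (a • x + (1-a) • y), q_combo,
      dotProduct_add, dotProduct_smul, dotProduct_smul]
    simp only [smul_eq_mul]
    nlinarith [mul_pos (mul_pos ha hb) hneg]
  · -- global maximizer
    intro π hπ
    have hsub0 : π - piS ≠ 0 := sub_ne_zero.mpr hπ
    have hneg : 0 < (π - piS) ⬝ᵥ (-(matC γ lam)) *ᵥ (π - piS) := by
      have h := hpd.dotProduct_mulVec_pos hsub0
      rwa [show star (π - piS) = π - piS from rfl] at h
    rw [Matrix.neg_mulVec, dotProduct_neg, q_sub] at hneg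
    have hBx : vecB β p lam ⬝ᵥ π = π ⬝ᵥ matC γ lam *ᵥ piS := by
      rw [← hCpi, dotProduct_comm]
    have hBs : vecB β p lam ⬝ᵥ piS = piS ⬝ᵥ matC γ lam *ᵥ piS := by
      rw [← hCpi, dotProduct_comm]
    rw [objF_eq hL β γ p lam hp1 π, objF_eq hL β γ p lam hp1 piS, hBx, hBs]
    linarith [hneg]


end Stmt0
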